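/- arXiv:1405.1663 — 2 statements merged into one kernel-verified Lean document; each statement's English description precedes it below -/
import Mathlib

section
/- Let c > 1 be a real number and let G be a graph on ⌈cn⌉ vertices whose edges are coloured blue and red such that there is no blue path on n vertices. Then there exist two disjoint vertex sets U, W, each of size at least ⌊n(c-1)/2⌋, such that no blue edge joins a vertex of U to a vertex of W. -/
/-!
Run a depth-first search along blue edges. At every moment the vertices are split into
finished ones `S`, the current blue path `P` (the stack of the search) and unvisited ones
`T`; the top of `P` is extended by a blue neighbour in `T` when it has one, and is moved to
`S` otherwise. Hence no blue edge ever joins `S` to `T`, and since there is no blue path on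
`n` vertices, `P` has at most `n - 1` vertices. As `S` grows one vertex at a time from `∅` to
`V`, we may stop when `|S| = k := ⌊n(c-1)/2⌋`; then `|T| ≥ ⌈cn⌉ - k - (n - 1) ≥ k`.
-/

open Finset SimpleGraph

namespace SimpleGraph

variable {V : Type*} {G : SimpleGraph V} {n : ℕ}

theorem length_ne_of_isChain_of_nodup
    (hnopath : ¬ ∃ (u v : V) (p : G.Walk u v), p.IsPath ∧ p.support.length = n)
    {l : List V} (hne : l ≠ []) (hnodup : l.Nodup) (hchain : l.IsChain G.Adj) :
    l.length ≠ n := by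
  rintro rfl
  refine hnopath ⟨_, _, Walk.ofSupport l hne hchain, ?_, by simp⟩
  rwa [Walk.isPath_def, Walk.support_ofSupport]

variable (G n) in
/-- A state of a depth-first search for paths of `G` on fewer than `n` vertices. The current
path is the stack of the search, its top at the head; the vertices neither in `done` nor on
`path` are the unvisited ones. -/
structure DFSState where
  done : Finset V
  path : List V
  not_mem_done : ∀ x ∈ path, x ∉ done
  nodup : path.Nodup
  isChain : path.IsChain G.Adj
  length_lt : path.length < n
  not_adj : ∀ s ∈ done, ∀ t, t ∉ done → t ∉ path → ¬ G.Adj s t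

namespace DFSState

def init (hn : 0 < n) : DFSState G n where
  done := ∅
  path := []
  not_mem_done := by simp
  nodup := List.nodup_nil
  isChain := List.isChain_nil
  length_lt := hn
  not_adj := by simp

def push (hnopath : ¬ ∃ (u v : V) (p : G.Walk u v), p.IsPath ∧ p.support.length = n)
    (σ : DFSState G n) (t : V) (ht : t ∉ σ.done) (htp : t ∉ σ.path)
    (hadj : ∀ v ∈ σ.path.head?, G.Adj t v) : DFSState G n where
  done := σ.done
  path := t :: σ.path
  not_mem_done := by
    rintro x (_ | ⟨_, hx⟩)
    exacts [ht, σ.not_mem_done x hx]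
  nodup := List.nodup_cons.mpr ⟨htp, σ.nodup⟩
  isChain := List.isChain_cons.mpr ⟨hadj, σ.isChain⟩
  length_lt := by
    have hne := length_ne_of_isChain_of_nodup hnopath (List.cons_ne_nil t σ.path)
      (List.nodup_cons.mpr ⟨htp, σ.nodup⟩) (List.isChain_cons.mpr ⟨hadj, σ.isChain⟩)
    have := σ.length_lt
    simp only [List.length_cons] at hne ⊢
    omega
  not_adj s hs u hu hup := σ.not_adj s hs u hu (fun h => hup (List.mem_cons_of_mem t h))

def pop [DecidableEq V] (σ : DFSState G n) {v : V} {rest : List V} (hp : σ.path = v :: rest)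
    (hv : ∀ t, t ∉ σ.done → t ∉ σ.path → ¬ G.Adj v t) : DFSState G n where
  done := insert v σ.done
  path := rest
  not_mem_done x hx := by
    have hnodup := σ.nodup
    rw [hp, List.nodup_cons] at hnodup
    rw [mem_insert, not_or]
    exact ⟨fun h => hnodup.1 (h ▸ hx), σ.not_mem_done x (hp ▸ List.mem_cons_of_mem v hx)⟩
  nodup := (hp ▸ σ.nodup).of_cons
  isChain := (hp ▸ σ.isChain).tail
  length_lt := by
    have := σ.length_lt
    rw [hp, List.length_cons] at this
    omega
  not_adj s hs t ht htp := by
    rw [mem_insert, not_or] at ht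
    have htp' : t ∉ σ.path := by
      rw [hp, List.mem_cons, not_or]
      exact ⟨ht.1, htp⟩
    rcases mem_insert.mp hs with rfl | hs
    exacts [hv t ht.2 htp', σ.not_adj s hs t ht.2 htp']

section

variable [Fintype V] [DecidableEq V] (σ : DFSState G n)

def unvisited : Finset V := (σ.done ∪ σ.path.toFinset)ᶜ

theorem disjoint_done_unvisited : Disjoint σ.done σ.unvisited :=
  Finset.disjoint_left.mpr fun _ hx hu => mem_compl.mp hu (mem_union_left _ hx)

theorem not_adj_unvisited : ∀ s ∈ σ.done, ∀ t ∈ σ.unvisited, ¬ G.Adj s t := by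
  intro s hs t ht
  simp only [unvisited, mem_compl, mem_union, List.mem_toFinset, not_or] at ht
  exact σ.not_adj s hs t ht.1 ht.2

theorem card_le_card_done_add_card_unvisited :
    Fintype.card V ≤ σ.done.card + σ.unvisited.card + (n - 1) := by
  have hunion := card_union_le σ.done σ.path.toFinset
  have hpath := σ.path.toFinset_card_le
  have hlen := σ.length_lt
  rw [unvisited, card_compl]
  omega

end

variable [DecidableEq V]
  (hnopath : ¬ ∃ (u v : V) (p : G.Walk u v), p.IsPath ∧ p.support.length = n)
include hnopath

/-- Pushing can happen only `n` times in a row, so some vertex is eventually finished. -/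
theorem exists_card_done_eq_succ (σ : DFSState G n) (h : ∃ x, x ∉ σ.done) :
    ∃ σ' : DFSState G n, σ'.done.card = σ.done.card + 1 := by
  by_cases hpush : ∃ t, t ∉ σ.done ∧ t ∉ σ.path ∧ ∀ v ∈ σ.path.head?, G.Adj t v
  · obtain ⟨t, ht, htp, hadj⟩ := hpush
    exact (σ.push hnopath t ht htp hadj).exists_card_done_eq_succ h
  · push Not at hpush
    cases hp : σ.path with
    | nil =>
      obtain ⟨x, hx⟩ := h
      obtain ⟨v, hv, -⟩ := hpush x hx (by simp [hp])
      simp [hp] at hv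
    | cons v rest =>
      have hv : ∀ t, t ∉ σ.done → t ∉ σ.path → ¬ G.Adj v t := by
        intro t ht htp hvt
        obtain ⟨w, hw, hnadj⟩ := hpush t ht htp
        rw [hp, List.head?_cons, Option.mem_some_iff] at hw
        exact hnadj (hw ▸ hvt.symm)
      have hvd : v ∉ σ.done := σ.not_mem_done v (by simp [hp])
      exact ⟨σ.pop hp hv, card_insert_of_notMem hvd⟩
termination_by n - σ.path.length
decreasing_by
  have := (σ.push hnopath t ht htp hadj).length_lt
  simp only [push, List.length_cons] at this ⊢
  omega

theorem exists_card_done_eq [Fintype V] (hn : 0 < n) :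
    ∀ j ≤ Fintype.card V, ∃ σ : DFSState G n, σ.done.card = j
  | 0, _ => ⟨init hn, rfl⟩
  | j + 1, hj => by
    obtain ⟨σ, rfl⟩ := exists_card_done_eq hn j (by omega)
    obtain ⟨x, -, hx⟩ := exists_mem_notMem_of_card_lt_card (t := univ) (by simpa using hj)
    exact σ.exists_card_done_eq_succ hnopath ⟨x, hx⟩

end DFSState

end SimpleGraph

theorem stmt0_general (c : ℝ) (hc : 1 < c) (n : ℕ) (V : Type*) [Fintype V]
    (hV : Fintype.card V = ⌈c * n⌉₊)
    (blue : SimpleGraph V)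
    (hnopath : ¬ ∃ (u v : V) (p : blue.Walk u v), p.IsPath ∧ p.support.length = n) :
    ∃ U W : Finset V, Disjoint U W ∧
      ⌊(n : ℝ) * (c - 1) / 2⌋₊ ≤ U.card ∧ ⌊(n : ℝ) * (c - 1) / 2⌋₊ ≤ W.card ∧
      ∀ u ∈ U, ∀ w ∈ W, ¬ blue.Adj u w := by
  classical
  rcases Nat.eq_zero_or_pos n with rfl | hn
  · exact ⟨∅, ∅, disjoint_empty_left _, by simp, by simp, by simp⟩
  set k := ⌊(n : ℝ) * (c - 1) / 2⌋₊
  have hk : 2 * k + n ≤ Fintype.card V := by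
    have hfloor : (k : ℝ) ≤ n * (c - 1) / 2 :=
      Nat.floor_le (div_nonneg (mul_nonneg n.cast_nonneg (sub_nonneg.mpr hc.le)) zero_le_two)
    rw [hV, ← Nat.cast_le (α := ℝ)]
    push_cast
    linarith [Nat.le_ceil (c * n)]
  obtain ⟨σ, hσ⟩ := DFSState.exists_card_done_eq hnopath hn k (by omega)
  have hcard := σ.card_le_card_done_add_card_unvisited
  exact ⟨σ.done, σ.unvisited, σ.disjoint_done_unvisited, hσ.ge, by omega, σ.not_adj_unvisited⟩

/-- Lemma 2.1(i): if a 2-coloured graph on ⌈cn⌉ vertices has no blue path on `n`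
vertices, there are disjoint sets `U, W` of size at least ⌊n(c-1)/2⌋ with no blue
edge between them. -/
theorem stmt0 (c : ℝ) (hc : 1 < c) (n : ℕ) (V : Type*) [Fintype V] [DecidableEq V]
    (hV : Fintype.card V = ⌈c * n⌉₊)
    (G blue : SimpleGraph V) (hblue : blue ≤ G)
    (hnopath : ¬ ∃ (u v : V) (p : blue.Walk u v), p.IsPath ∧ p.support.length = n) :
    ∃ U W : Finset V, Disjoint U W ∧
      ⌊(n : ℝ) * (c - 1) / 2⌋₊ ≤ U.card ∧ ⌊(n : ℝ) * (c - 1) / 2⌋₊ ≤ W.card ∧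
      ∀ u ∈ U, ∀ w ∈ W, ¬ blue.Adj u w :=
  stmt0_general c hc n V hV blue hnopath
end

section
/- Let G be a graph on cn vertices (c > 3) with the property that for every two disjoint vertex sets S, T of size n(c−3)/4 there is at least one edge between S and T. Then G → P_n, i.e., every 2-colouring of the edges of G with blue and red yields a monochromatic path on n vertices. -/
/-!
Run depth-first search in a graph `H` with no path on `n` vertices, keeping a set `S` of
finished vertices, a set `T` of unvisited ones and the current stack, which is a path and so
has fewer than `n` vertices. No edge ever joins `S` to `T`, and `|S| - |T|` grows by at most one
per step, so at some moment `|S| = |T|` and `S ∪ T` misses fewer than `n` vertices. This is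
Lemma 2.1.

The blue graph yields such a pair `S, T` of size at least `2m + n`; all `G`-edges between them
are red. Running the search again in the red graph on `S ∪ T` yields a pair `A, B` of red-free
sets, again missing fewer than `n` vertices of `S ∪ T`. Counting shows that `A ∩ S` and `B ∩ T`
(or `B ∩ S` and `A ∩ T`) both have at least `m` vertices, and the edge that the expansion
property puts between them is red, a contradiction.
-/

open Finset

namespace SimpleGraph

variable {V : Type*}

def HasPathOnVertices (H : SimpleGraph V) (n : ℕ) : Prop :=
  ∃ (u v : V) (p : H.Walk u v), p.IsPath ∧ p.support.length = n

lemma hasPathOnVertices_of_isChain {H : SimpleGraph V} {U : List V} (hU : U.IsChain H.Adj)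
    (hnd : U.Nodup) (hne : U ≠ []) : H.HasPathOnVertices U.length :=
  ⟨_, _, .ofSupport U hne hU, .mk' (by rwa [Walk.support_ofSupport]),
    by rw [Walk.support_ofSupport]⟩

structure IsDFSState (H : SimpleGraph V) (n : ℕ) (W S T : Finset V) (U : List V) : Prop where
  finished_subset : S ⊆ W
  unvisited_subset : T ⊆ W
  stack_subset : ∀ x ∈ U, x ∈ W
  disjoint : Disjoint S T
  stack_notMem_finished : ∀ x ∈ U, x ∉ S
  stack_notMem_unvisited : ∀ x ∈ U, x ∉ T
  nodup : U.Nodup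
  isChain : U.IsChain H.Adj
  length_lt : U.length < n
  card_eq : #W = #S + #T + U.length
  not_adj : ∀ s ∈ S, ∀ t ∈ T, ¬ H.Adj s t

namespace IsDFSState

variable {H : SimpleGraph V} {n : ℕ} {W S T : Finset V} {U : List V}

lemma init (hn : 0 < n) : IsDFSState H n W ∅ W [] where
  finished_subset := empty_subset W
  unvisited_subset := subset_refl W
  stack_subset := by simp
  disjoint := disjoint_empty_left W
  stack_notMem_finished := by simp
  stack_notMem_unvisited := by simp
  nodup := List.nodup_nil
  isChain := List.isChain_nil
  length_lt := hn
  card_eq := by simp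
  not_adj := by simp

variable [DecidableEq V]

lemma push (h : IsDFSState H n W S T U) {t : V} (ht : t ∈ T) (hadj : ∀ u ∈ U.head?, H.Adj t u)
    (hlen : U.length + 1 < n) : IsDFSState H n W S (T.erase t) (t :: U) where
  finished_subset := h.finished_subset
  unvisited_subset := (erase_subset t T).trans h.unvisited_subset
  stack_subset := by
    simpa using ⟨h.unvisited_subset ht, h.stack_subset⟩
  disjoint := h.disjoint.mono_right (erase_subset t T)
  stack_notMem_finished := by
    simpa using ⟨disjoint_right.1 h.disjoint ht, h.stack_notMem_finished⟩
  stack_notMem_unvisited := by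
    simpa using fun x hx _ => h.stack_notMem_unvisited x hx
  nodup := List.nodup_cons.2 ⟨fun htU => h.stack_notMem_unvisited t htU ht, h.nodup⟩
  isChain := List.isChain_cons.2 ⟨hadj, h.isChain⟩
  length_lt := hlen
  card_eq := by
    have := card_erase_add_one ht
    have := h.card_eq
    simp only [List.length_cons]
    omega
  not_adj s hs x hx := h.not_adj s hs x (mem_of_mem_erase hx)

lemma pop {u : V} (h : IsDFSState H n W S T (u :: U)) (hu : ∀ t ∈ T, ¬ H.Adj u t) :
    IsDFSState H n W (insert u S) T U where
  finished_subset := insert_subset (h.stack_subset u List.mem_cons_self) h.finished_subset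
  unvisited_subset := h.unvisited_subset
  stack_subset x hx := h.stack_subset x (List.mem_cons_of_mem u hx)
  disjoint := disjoint_insert_left.2 ⟨h.stack_notMem_unvisited u List.mem_cons_self, h.disjoint⟩
  stack_notMem_finished x hx := by
    simpa [not_or] using ⟨fun hxu => (List.nodup_cons.1 h.nodup).1 (hxu ▸ hx),
      h.stack_notMem_finished x (List.mem_cons_of_mem u hx)⟩
  stack_notMem_unvisited x hx := h.stack_notMem_unvisited x (List.mem_cons_of_mem u hx)
  nodup := (List.nodup_cons.1 h.nodup).2
  isChain := h.isChain.tail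
  length_lt := (Nat.lt_succ_self _).trans h.length_lt
  card_eq := by
    have := card_insert_of_notMem (h.stack_notMem_finished u List.mem_cons_self)
    have := h.card_eq
    simp only [List.length_cons] at this
    omega
  not_adj s hs t ht := by
    rcases mem_insert.1 hs with rfl | hs
    · exact hu t ht
    · exact h.not_adj s hs t ht

/-- Each step either pushes an unvisited neighbour of the top of the stack (any unvisited vertex
if the stack is empty) or pops the top; `2 |T| + |U|` drops in both cases. -/
theorem hasPathOnVertices_or_exists_balanced (h : IsDFSState H n W S T U) (hle : #S ≤ #T) :
    H.HasPathOnVertices n ∨ ∃ S' T' U', IsDFSState H n W S' T' U' ∧ #S' = #T' := by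
  induction hμ : 2 * #T + U.length using Nat.strong_induction_on generalizing S T U with
  | _ μ ih =>
  rcases hle.eq_or_lt with heq | hlt
  · exact Or.inr ⟨S, T, U, h, heq⟩
  by_cases hpush : ∃ t ∈ T, ∀ u ∈ U.head?, H.Adj t u
  · obtain ⟨t, ht, hadj⟩ := hpush
    have hcard := card_erase_add_one ht
    by_cases hlen : U.length + 1 < n
    · exact ih _ (by simp only [List.length_cons]; omega) (h.push ht hadj hlen) (by omega) rfl
    · left
      have hpath := hasPathOnVertices_of_isChain (List.isChain_cons.2 ⟨hadj, h.isChain⟩)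
        (List.nodup_cons.2 ⟨fun htU => h.stack_notMem_unvisited t htU ht, h.nodup⟩)
        (List.cons_ne_nil t U)
      rwa [List.length_cons, show U.length + 1 = n by have := h.length_lt; omega] at hpath
  · push Not at hpush
    obtain ⟨t, ht⟩ : T.Nonempty := card_pos.1 (by omega)
    cases U with
    | nil => simp at hpush; exact absurd ht (hpush t)
    | cons u U =>
      have hu : ∀ t ∈ T, ¬ H.Adj u t := fun t ht hut => by
        simpa [hut.symm] using hpush t ht
      exact ih _ (by simp only [List.length_cons] at hμ; omega) (h.pop hu)
        (by rw [card_insert_of_notMem (h.stack_notMem_finished u List.mem_cons_self)]; omega) rfl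

end IsDFSState

theorem hasPathOnVertices_or_exists_not_adj (H : SimpleGraph V) {n : ℕ} (hn : 0 < n)
    (W : Finset V) :
    H.HasPathOnVertices n ∨ ∃ S T : Finset V, S ⊆ W ∧ T ⊆ W ∧ Disjoint S T ∧ #S = #T ∧
      #W < 2 * #S + n ∧ ∀ s ∈ S, ∀ t ∈ T, ¬ H.Adj s t := by
  classical
  refine ((IsDFSState.init (W := W) hn).hasPathOnVertices_or_exists_balanced (by simp)).imp_right ?_
  rintro ⟨S, T, U, h, hST⟩
  exact ⟨S, T, h.finished_subset, h.unvisited_subset, h.disjoint, hST,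
    by have := h.card_eq; have := h.length_lt; omega, h.not_adj⟩

lemma exists_adj_of_le_card {G : SimpleGraph V} {m : ℕ}
    (hexp : ∀ S T : Finset V, Disjoint S T → #S = m → #T = m → ∃ s ∈ S, ∃ t ∈ T, G.Adj s t)
    {X Y : Finset V} (hXY : Disjoint X Y) (hX : m ≤ #X) (hY : m ≤ #Y) :
    ∃ x ∈ X, ∃ y ∈ Y, G.Adj x y := by
  obtain ⟨X', hX', hX'm⟩ := exists_subset_card_eq hX
  obtain ⟨Y', hY', hY'm⟩ := exists_subset_card_eq hY
  obtain ⟨x, hx, y, hy, hxy⟩ := hexp X' Y' (hXY.mono hX' hY') hX'm hY'm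
  exact ⟨x, hX' hx, y, hY' hy, hxy⟩

end SimpleGraph

namespace Finset

variable {α : Type*} [DecidableEq α] {A B S T : Finset α}

lemma card_inter_add_card_inter_of_subset_union (hST : Disjoint S T) (hA : A ⊆ S ∪ T) :
    #(A ∩ S) + #(A ∩ T) = #A := by
  rw [← card_union_of_disjoint (hST.mono inter_subset_right inter_subset_right),
    ← inter_union_distrib_left, inter_eq_left.2 hA]

lemma card_inter_add_card_inter_le (hAB : Disjoint A B) : #(A ∩ S) + #(B ∩ S) ≤ #S := by
  rw [← card_union_of_disjoint (hAB.mono inter_subset_left inter_subset_left)]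
  exact card_le_card (union_subset inter_subset_right inter_subset_right)

end Finset

open SimpleGraph

theorem stmt12_general (c : ℝ) (n : ℕ) (hn : 0 < n)
    {V : Type*} [Fintype V]
    (hV : (Fintype.card V : ℝ) = c * n)
    (m : ℕ) (hm : (m : ℝ) = n * (c - 3) / 4)
    (G : SimpleGraph V)
    (hexp : ∀ S T : Finset V, Disjoint S T → S.card = m → T.card = m →
      ∃ s ∈ S, ∃ t ∈ T, G.Adj s t) :
    ∀ blue ≤ G,
      (∃ (u v : V) (p : blue.Walk u v), p.IsPath ∧ p.support.length = n) ∨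
      (∃ (u v : V) (p : (G \ blue).Walk u v), p.IsPath ∧ p.support.length = n) := by
  intro blue _
  classical
  have hcard : Fintype.card V = 4 * m + 3 * n := by
    exact_mod_cast (by rw [hV, hm]; ring : (Fintype.card V : ℝ) = 4 * m + 3 * n)
  obtain hblue | ⟨S, T, -, -, hST, hSTc, hS, hnoblue⟩ :=
    blue.hasPathOnVertices_or_exists_not_adj hn univ
  · exact Or.inl hblue
  obtain hred | ⟨A, B, hA, hB, hAB, hABc, hAB', hnored⟩ :=
    (G \ blue).hasPathOnVertices_or_exists_not_adj hn (S ∪ T)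
  · exact Or.inr hred
  exfalso
  have no_red_between : ∀ A' B' : Finset V, (∀ a ∈ A', ∀ b ∈ B', ¬ (G \ blue).Adj a b) →
      m ≤ #(A' ∩ S) → m ≤ #(B' ∩ T) → False := by
    intro A' B' hA'B' hA' hB'
    obtain ⟨x, hx, y, hy, hxy⟩ :=
      exists_adj_of_le_card hexp (hST.mono inter_subset_right inter_subset_right) hA' hB'
    rw [mem_inter] at hx hy
    exact hA'B' x hx.1 y hy.1 ⟨hxy, hnoblue x hx.2 y hy.2⟩
  rw [card_univ, hcard] at hS
  rw [card_union_of_disjoint hST] at hAB'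
  have := card_inter_add_card_inter_of_subset_union hST hA
  have := card_inter_add_card_inter_of_subset_union hST hB
  have := card_inter_add_card_inter_le (S := S) hAB
  have := card_inter_add_card_inter_le (S := T) hAB
  obtain ⟨hAS, hBT⟩ | ⟨hBS, hAT⟩ :
      (m ≤ #(A ∩ S) ∧ m ≤ #(B ∩ T)) ∨ (m ≤ #(B ∩ S) ∧ m ≤ #(A ∩ T)) := by omega
  · exact no_red_between A B hnored hAS hBT
  · exact no_red_between B A (fun b hb a ha h => hnored a ha b hb h.symm) hBS hAT

/-- Deterministic core of Theorem 1.1: a graph on `cn` vertices (`c > 3`) in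
which every two disjoint sets of `n(c-3)/4` vertices are joined by an edge
arrows `P_n`. -/
theorem stmt12 (c : ℝ) (hc : 3 < c) (n : ℕ) (hn : 0 < n)
    {V : Type*} [Fintype V] [DecidableEq V]
    (hV : (Fintype.card V : ℝ) = c * n)
    (m k : ℕ) (hm : (m : ℝ) = n * (c - 3) / 4) (hk : (k : ℝ) = n * (c - 1) / 2)
    (hm0 : 0 < m) (hk0 : 0 < k)
    (G : SimpleGraph V)
    (hexp : ∀ S T : Finset V, Disjoint S T → S.card = m → T.card = m →
      ∃ s ∈ S, ∃ t ∈ T, G.Adj s t) :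
    ∀ blue ≤ G,
      (∃ (u v : V) (p : blue.Walk u v), p.IsPath ∧ p.support.length = n) ∨
      (∃ (u v : V) (p : (G \ blue).Walk u v), p.IsPath ∧ p.support.length = n) :=
  stmt12_general c n hn hV m hm G hexp
end
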